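/- Every 3×3 Hermitian quaternionic matrix X can be transformed to a real diagonal matrix by some A ∈ Sp(3): there exists A with AᴴA = E such that A X Aᴴ = diag(ξ₁, ξ₂, ξ₃) with ξᵢ ∈ ℝ. -/

import Mathlib

noncomputable section
open Matrix

abbrev ℍ := Quaternion ℝ

/-!
Regard ℍⁿ as a real inner product space of dimension `4n` with `⟪x, y⟫ = Re (x ⬝ᵥ star y)`.
For Hermitian `X` the real-linear map `w ↦ w ᵥ* X` is symmetric, so every nonzero invariant
subspace contains a unit eigenvector with a real eigenvalue. Given `k < n` orthonormal left
eigenrows `A` of `X`, their left ℍ-span `{c ᵥ* A}` is invariant and has real dimension at most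
`4k < 4n`; its orthogonal complement is invariant as well and yields a new unit eigenrow `w`.
Real orthogonality to the whole left ℍ-span makes `w` quaternionically orthogonal to the rows
of `A`. After `n` steps `A Aᴴ = 1` and `A X = diag ξ A`, hence `A X Aᴴ = diag ξ`.
-/

open scoped RealInnerProductSpace
open Module

lemma LinearMap.IsSymmetric.invariant_orthogonal {𝕜 E : Type*} [RCLike 𝕜] [NormedAddCommGroup E]
    [InnerProductSpace 𝕜 E] {T : E →ₗ[𝕜] E} (hT : T.IsSymmetric) {S : Submodule 𝕜 E}
    (hS : ∀ v ∈ S, T v ∈ S) : ∀ v ∈ Sᗮ, T v ∈ Sᗮ := fun v hv =>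
  (Submodule.mem_orthogonal _ _).2 fun u hu => by
    rw [← hT]
    exact (Submodule.mem_orthogonal _ _).1 hv _ (hS u hu)

lemma LinearMap.IsSymmetric.exists_unit_eigenvector_mem {E : Type*} [NormedAddCommGroup E]
    [InnerProductSpace ℝ E] [FiniteDimensional ℝ E] {T : E →ₗ[ℝ] E} (hT : T.IsSymmetric)
    {S : Submodule ℝ E} (hS : ∀ v ∈ S, T v ∈ S) (hS₀ : S ≠ ⊥) :
    ∃ v ∈ S, ‖v‖ = 1 ∧ ∃ μ : ℝ, T v = μ • v := by
  have : Nontrivial S := Submodule.nontrivial_iff_ne_bot.2 hS₀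
  obtain ⟨μ, hμ⟩ : ∃ μ : ℝ, Module.End.HasEigenvalue (T.restrict hS) μ :=
    ⟨_, (hT.restrict_invariant hS).hasEigenvalue_iSup_of_finiteDimensional⟩
  obtain ⟨v, hv⟩ := hμ.exists_hasEigenvector
  have hv₀ : (v : E) ≠ 0 := by simpa using hv.2
  refine ⟨‖(v : E)‖⁻¹ • (v : E), S.smul_mem _ v.2, norm_smul_inv_norm hv₀, μ, ?_⟩
  rw [map_smul, ← T.coe_restrict_apply hS, hv.apply_eq_smul, Submodule.coe_smul, smul_comm]

section QuaternionVectors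

variable {ι κ : Type*}

def Matrix.vecMulRealLinear [Fintype κ] (M : Matrix κ ι ℍ) :
    (PiLp 2 fun _ : κ => ℍ) →ₗ[ℝ] PiLp 2 fun _ : ι => ℍ where
  toFun x := WithLp.toLp 2 (x.ofLp ᵥ* M)
  map_add' x y := by simp [add_vecMul]
  map_smul' c x := by simp [smul_vecMul]

@[simp]
lemma Matrix.vecMulRealLinear_apply [Fintype κ] (M : Matrix κ ι ℍ) (x : PiLp 2 fun _ : κ => ℍ) :
    M.vecMulRealLinear x = WithLp.toLp 2 (x.ofLp ᵥ* M) :=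
  rfl

variable [Fintype ι]

lemma PiLp.quaternion_inner_eq_re_dotProduct (x y : PiLp 2 fun _ : ι => ℍ) :
    ⟪x, y⟫ = (x.ofLp ⬝ᵥ star y.ofLp).re := by
  simp only [PiLp.inner_apply, Quaternion.inner_def, dotProduct, Pi.star_apply]
  exact (map_sum (QuaternionAlgebra.reₗ (-1 : ℝ) 0 (-1))
    (fun i => x.ofLp i * star (y.ofLp i)) _).symm

lemma PiLp.quaternion_dotProduct_star_self (x : PiLp 2 fun _ : ι => ℍ) :
    x.ofLp ⬝ᵥ star x.ofLp = ((‖x‖ ^ 2 : ℝ) : ℍ) := by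
  simp only [dotProduct, Pi.star_apply, Quaternion.self_mul_star, PiLp.norm_sq_eq_of_L2,
    Quaternion.normSq_eq_norm_mul_self, ← sq, ← Quaternion.algebraMap_def, map_sum]

lemma PiLp.finrank_quaternion : finrank ℝ (PiLp 2 fun _ : ι => ℍ) = 4 * Fintype.card ι := by
  rw [(WithLp.linearEquiv 2 ℝ (ι → ℍ)).finrank_eq, Module.finrank_pi_fintype]
  simp [Quaternion.finrank_eq_four, mul_comm]

lemma Matrix.isSymmetric_vecMulRealLinear {M : Matrix ι ι ℍ} (hM : Mᴴ = M) :
    M.vecMulRealLinear.IsSymmetric := by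
  intro x y
  rw [vecMulRealLinear_apply, vecMulRealLinear_apply, PiLp.quaternion_inner_eq_re_dotProduct,
    PiLp.quaternion_inner_eq_re_dotProduct, star_vecMul, hM, ← dotProduct_mulVec]

lemma Matrix.mulVec_star_eq_zero_of_mem_orthogonal [Fintype κ] {M : Matrix κ ι ℍ}
    {w : PiLp 2 fun _ : ι => ℍ} (hw : w ∈ (LinearMap.range M.vecMulRealLinear)ᗮ) :
    M *ᵥ star w.ofLp = 0 := by
  set y := M *ᵥ star w.ofLp
  -- `w` is orthogonal to `star y ᵥ* M`, and that inner product is `‖star y‖ ^ 2`.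
  have h := (Submodule.mem_orthogonal _ _).1 hw _
    (LinearMap.mem_range_self _ (WithLp.toLp 2 (star y)))
  have hy : ⟪WithLp.toLp 2 (star y), WithLp.toLp 2 (star y)⟫ = 0 := by
    rwa [PiLp.quaternion_inner_eq_re_dotProduct, star_star, dotProduct_mulVec,
      ← PiLp.quaternion_inner_eq_re_dotProduct]
  simpa using hy

end QuaternionVectors

section LeftEigenrows

variable {ι : Type*} [Fintype ι] {k : ℕ}

lemma Matrix.cons_mul_conjTranspose_cons {A : Matrix (Fin k) ι ℍ} {w : ι → ℍ} (hA : A * Aᴴ = 1)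
    (hAw : A *ᵥ star w = 0) (hw : w ⬝ᵥ star w = 1) :
    of (vecCons w fun a => A a) * (of (vecCons w fun a => A a))ᴴ = 1 := by
  refine Matrix.ext fun a b => ?_
  induction a using Fin.cases <;> induction b using Fin.cases
  · simpa [mul_apply, dotProduct] using hw
  · simpa [mul_apply, mulVec, dotProduct, (Fin.succ_ne_zero _).symm] using
      congrArg star (congrFun hAw _)
  · simpa [mul_apply, mulVec, dotProduct] using congrFun hAw _
  · simpa [mul_apply, one_apply] using congrFun (congrFun hA _) _

lemma Matrix.cons_mul_eq_diagonal_mul_cons {X : Matrix ι ι ℍ} {A : Matrix (Fin k) ι ℍ}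
    {w : ι → ℍ} {ξ : Fin k → ℝ} {μ : ℝ} (hA : A * X = diagonal (fun a => (ξ a : ℍ)) * A)
    (hw : w ᵥ* X = μ • w) :
    of (vecCons w fun a => A a) * X =
      diagonal (fun a => ((vecCons μ ξ a : ℝ) : ℍ)) * of (vecCons w fun a => A a) := by
  refine Matrix.ext fun a j => ?_
  rw [diagonal_mul]
  induction a using Fin.cases with
  | zero => simpa [vecMul, dotProduct, Quaternion.coe_mul_eq_smul] using congrFun hw j
  | succ a =>
    have hAaj := congrFun (congrFun hA a) j
    rw [diagonal_mul] at hAaj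
    simpa [mul_apply] using hAaj

lemma Matrix.exists_unit_left_eigenvector_orthogonal_rows {X : Matrix ι ι ℍ} (hX : Xᴴ = X)
    {A : Matrix (Fin k) ι ℍ} {ξ : Fin k → ℝ} (hA : A * X = diagonal (fun a => (ξ a : ℍ)) * A)
    (hk : k < Fintype.card ι) :
    ∃ w : ι → ℍ, A *ᵥ star w = 0 ∧ w ⬝ᵥ star w = 1 ∧ ∃ μ : ℝ, w ᵥ* X = μ • w := by
  set S := LinearMap.range A.vecMulRealLinear
  have hT := isSymmetric_vecMulRealLinear hX
  have hS : ∀ v ∈ S, X.vecMulRealLinear v ∈ S := by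
    rintro - ⟨c, rfl⟩
    refine ⟨WithLp.toLp 2 (c.ofLp ᵥ* diagonal fun a => (ξ a : ℍ)), ?_⟩
    simp only [vecMulRealLinear_apply, vecMul_vecMul, hA]
  have hS_ne_top : S ≠ ⊤ := by
    intro h
    have : finrank ℝ S ≤ _ := LinearMap.finrank_range_le A.vecMulRealLinear
    rw [h, finrank_top, PiLp.finrank_quaternion, PiLp.finrank_quaternion, Fintype.card_fin] at this
    omega
  obtain ⟨w, hw, hw_norm, μ, hμ⟩ := hT.exists_unit_eigenvector_mem (hT.invariant_orthogonal hS)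
    (Submodule.orthogonal_eq_bot_iff.not.2 hS_ne_top)
  refine ⟨w.ofLp, mulVec_star_eq_zero_of_mem_orthogonal hw, ?_, μ, congrArg WithLp.ofLp hμ⟩
  rw [PiLp.quaternion_dotProduct_star_self, hw_norm, one_pow, Quaternion.coe_one]

lemma Matrix.exists_orthonormal_left_eigenrows {X : Matrix ι ι ℍ} (hX : Xᴴ = X) :
    ∀ k ≤ Fintype.card ι, ∃ A : Matrix (Fin k) ι ℍ, A * Aᴴ = 1 ∧
      ∃ ξ : Fin k → ℝ, A * X = diagonal (fun a => (ξ a : ℍ)) * A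
  | 0, _ => ⟨0, Subsingleton.elim _ _, 0, Subsingleton.elim _ _⟩
  | k + 1, hk => by
    obtain ⟨A, hA, ξ, hAX⟩ := exists_orthonormal_left_eigenrows hX k (by omega)
    obtain ⟨w, hAw, hw, μ, hwX⟩ := exists_unit_left_eigenvector_orthogonal_rows hX hAX hk
    exact ⟨_, cons_mul_conjTranspose_cons hA hAw hw, _, cons_mul_eq_diagonal_mul_cons hAX hwX⟩

end LeftEigenrows

theorem hermitian_3x3_quaternionic_diagonalizable_by_Sp3
    (X : Matrix (Fin 3) (Fin 3) ℍ) (hX : Xᴴ = X) :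
    ∃ A : Matrix (Fin 3) (Fin 3) ℍ, Aᴴ * A = 1 ∧
      ∃ ξ : Fin 3 → ℝ, A * X * Aᴴ = Matrix.diagonal (fun i => (ξ i : ℍ)) := by
  obtain ⟨A, hA, ξ, hAX⟩ := exists_orthonormal_left_eigenrows hX 3 (Fintype.card_fin 3).le
  refine ⟨A, mul_eq_one_comm.mp hA, ξ, ?_⟩
  rw [hAX, Matrix.mul_assoc, hA, Matrix.mul_one]
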